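/- arXiv:2307.02241 — 2 statements merged into one kernel-verified Lean document; each statement's English description precedes it below -/
import Mathlib

section
/- Let G=(V,E) be a graph, and A,B,C ⊆ V with A ∪ C = V, A ∩ C = B, and no edges between A∖B and C∖B. If X and Y are independent dominating sets of G[A] and G[C] respectively, then (X ∪ Y) ∖ B is an independent set in G, and every vertex of G not dominated by (X ∪ Y) ∖ B lies in N[B]. -/
/-- `X` is an independent set in `G`. -/
def IsIndepSet' {V : Type*} (G : SimpleGraph V) (X : Set V) : Prop :=
  ∀ x ∈ X, ∀ y ∈ X, ¬ G.Adj x y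

/-- `X` is an independent dominating set of the induced subgraph `G[A]`. -/
def IndDomOn {V : Type*} (G : SimpleGraph V) (A X : Set V) : Prop :=
  X ⊆ A ∧ IsIndepSet' G X ∧ ∀ v ∈ A, ∃ x ∈ X, x = v ∨ G.Adj x v

/-- The closed neighborhood `N[S]` of a vertex set `S` in `G`. -/
def closedNbhd {V : Type*} (G : SimpleGraph V) (S : Set V) : Set V :=
  {v | v ∈ S ∨ ∃ x ∈ S, G.Adj x v}

/-- If `X` and `Y` are independent dominating sets of `G[A]` and `G[C]` respectively, then
`(X ∪ Y) \ B` is independent in `G` and every vertex not dominated by it lies in `N[B]`. -/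
theorem indDom_union_minus_boundary {V : Type*} (G : SimpleGraph V)
    (A B C : Set V) (hAC : A ∪ C = Set.univ) (hB : A ∩ C = B)
    (hsep : ∀ a ∈ A \ B, ∀ c ∈ C \ B, ¬ G.Adj a c)
    (X Y : Set V) (hX : IndDomOn G A X) (hY : IndDomOn G C Y) :
    IsIndepSet' G ((X ∪ Y) \ B) ∧
      ∀ v : V, v ∉ closedNbhd G ((X ∪ Y) \ B) → v ∈ closedNbhd G B := by
  obtain ⟨hXA, hXind, hXdom⟩ := hX
  obtain ⟨hYC, hYind, hYdom⟩ := hY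
  constructor
  · rintro x ⟨hxXY, hxB⟩ y ⟨hyXY, hyB⟩
    rcases hxXY with hx | hx <;> rcases hyXY with hy | hy
    · exact hXind x hx y hy
    · exact hsep x ⟨hXA hx, hxB⟩ y ⟨hYC hy, hyB⟩
    · intro h
      exact hsep y ⟨hXA hy, hyB⟩ x ⟨hYC hx, hxB⟩ h.symm
    · exact hYind x hx y hy
  · intro v hv
    have hvU : v ∈ A ∪ C := hAC ▸ Set.mem_univ v
    rcases hvU with hvA | hvC
    · obtain ⟨x, hx, hxv⟩ := hXdom v hvA
      by_cases hxB : x ∈ B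
      · rcases hxv with rfl | hadj
        · exact Or.inl hxB
        · exact Or.inr ⟨x, hxB, hadj⟩
      · exfalso
        apply hv
        rcases hxv with rfl | hadj
        · exact Or.inl ⟨Or.inl hx, hxB⟩
        · exact Or.inr ⟨x, ⟨Or.inl hx, hxB⟩, hadj⟩
    · obtain ⟨x, hx, hxv⟩ := hYdom v hvC
      by_cases hxB : x ∈ B
      · rcases hxv with rfl | hadj
        · exact Or.inl hxB
        · exact Or.inr ⟨x, hxB, hadj⟩
      · exfalso
        apply hv
        rcases hxv with rfl | hadj
        · exact Or.inl ⟨Or.inr hx, hxB⟩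
        · exact Or.inr ⟨x, ⟨Or.inr hx, hxB⟩, hadj⟩
end

section
/- In the graph G constructed from a Hitting Set instance (U,𝒮) (vertices {v_x : x ∈ U} ∪ {w_S : S ∈ 𝒮} ∪ {u}, clique on {v_x} ∪ {u}, edge v_x w_S iff x ∈ S, all sets in 𝒮 nonempty), the minimum connected dominating set size equals the minimum dominating set size, since some minimum dominating set is contained in the clique {v_x : x ∈ U} ∪ {u}. -/
/-- `D` is a dominating set of `G`. -/
def IsDomSet {V : Type*} (G : SimpleGraph V) (D : Set V) : Prop :=
  ∀ v : V, ∃ x ∈ D, x = v ∨ G.Adj x v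

/-- The graph built from a Hitting Set instance `(U, S)`: vertices `v_x` (`Sum.inl x`),
`w_S` (`Sum.inr (Sum.inl i)`), and `u` (`Sum.inr (Sum.inr ())`); the `v_x` together with `u`
form a clique, and `v_x` is adjacent to `w_{S i}` iff `x ∈ S i`. -/
def HSGraph {U ι : Type*} (S : ι → Set U) : SimpleGraph (U ⊕ ι ⊕ Unit) :=
  SimpleGraph.fromRel fun x y =>
    match x, y with
    | Sum.inl _, Sum.inl _ => True
    | Sum.inl a, Sum.inr (Sum.inl i) => a ∈ S i
    | Sum.inl _, Sum.inr (Sum.inr _) => True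
    | _, _ => False

lemma hsAdj {U ι : Type*} (S : ι → Set U) (a b : U ⊕ ι ⊕ Unit) :
    (HSGraph S).Adj a b ↔ a ≠ b ∧
      ((match a, b with
        | Sum.inl _, Sum.inl _ => True
        | Sum.inl a, Sum.inr (Sum.inl i) => a ∈ S i
        | Sum.inl _, Sum.inr (Sum.inr _) => True
        | _, _ => False) ∨
       (match b, a with
        | Sum.inl _, Sum.inl _ => True
        | Sum.inl a, Sum.inr (Sum.inl i) => a ∈ S i
        | Sum.inl _, Sum.inr (Sum.inr _) => True
        | _, _ => False)) := by
  rw [HSGraph, SimpleGraph.fromRel_adj]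

noncomputable def toClique {U ι : Type*} (S : ι → Set U) (hS : ∀ i, (S i).Nonempty) :
    (U ⊕ ι ⊕ Unit) → (U ⊕ ι ⊕ Unit)
  | Sum.inl a => Sum.inl a
  | Sum.inr (Sum.inl i) => Sum.inl (hS i).choose
  | Sum.inr (Sum.inr u) => Sum.inr (Sum.inr u)

lemma toClique_dominates {U ι : Type*} (S : ι → Set U) (hS : ∀ i, (S i).Nonempty)
    (x v : U ⊕ ι ⊕ Unit) (h : x = v ∨ (HSGraph S).Adj x v) :
    toClique S hS x = v ∨ (HSGraph S).Adj (toClique S hS x) v := by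
  match x with
  | Sum.inl a => exact h
  | Sum.inr (Sum.inr u) => exact h
  | Sum.inr (Sum.inl i) =>
      have hc : (hS i).choose ∈ S i := (hS i).choose_spec
      rcases h with rfl | h
      · right
        rw [hsAdj]
        exact ⟨by simp [toClique], Or.inl hc⟩
      · -- v must be Sum.inl a with a ∈ S i
        rw [hsAdj] at h
        match v, h with
        | Sum.inl a, ⟨hne, h⟩ =>
            have ha : a ∈ S i := by
              rcases h with h | h
              · exact h.elim
              · exact h
            by_cases hca : (hS i).choose = a
            · exact Or.inl (by simp [toClique, hca])
            · right
              rw [hsAdj]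
              exact ⟨by simp [toClique, hca], Or.inl trivial⟩
        | Sum.inr (Sum.inl j), ⟨hne, h⟩ => simp at h
        | Sum.inr (Sum.inr u), ⟨hne, h⟩ => simp at h

lemma clique_adj {U ι : Type*} (S : ι → Set U) (a b : U ⊕ ι ⊕ Unit)
    (ha : a ∈ Set.range Sum.inl ∪ {Sum.inr (Sum.inr ())})
    (hb : b ∈ Set.range Sum.inl ∪ {Sum.inr (Sum.inr ())}) (hne : a ≠ b) :
    (HSGraph S).Adj a b := by
  rw [hsAdj]
  refine ⟨hne, ?_⟩
  rcases ha with ⟨x, rfl⟩ | ha <;> rcases hb with ⟨y, rfl⟩ | hb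
  · exact Or.inl trivial
  · simp only [Set.mem_singleton_iff] at hb; subst hb; exact Or.inl trivial
  · simp only [Set.mem_singleton_iff] at ha; subst ha; exact Or.inr trivial
  · simp only [Set.mem_singleton_iff] at ha hb; exact absurd (ha.trans hb.symm) hne

/-- In `HSGraph S` (all sets of the Hitting Set instance nonempty), the minimum connected
dominating set size equals the minimum dominating set size; indeed some minimum dominating
set is contained in the clique `{v_x : x ∈ U} ∪ {u}`. -/
theorem connDom_eq_dom_HSGraph {U ι : Type*} [Fintype U] [Fintype ι]
    (S : ι → Set U) (hS : ∀ i, (S i).Nonempty) :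
    (∃ D : Set (U ⊕ ι ⊕ Unit), IsDomSet (HSGraph S) D ∧
        D.ncard = sInf {n | ∃ D' : Set (U ⊕ ι ⊕ Unit), IsDomSet (HSGraph S) D' ∧ D'.ncard = n} ∧
        D ⊆ Set.range Sum.inl ∪ {Sum.inr (Sum.inr ())}) ∧
    sInf {n | ∃ D : Set (U ⊕ ι ⊕ Unit), (IsDomSet (HSGraph S) D ∧
        ((HSGraph S).induce D).Connected) ∧ D.ncard = n} =
      sInf {n | ∃ D : Set (U ⊕ ι ⊕ Unit), IsDomSet (HSGraph S) D ∧ D.ncard = n} := by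
  classical
  set domSet := {n | ∃ D' : Set (U ⊕ ι ⊕ Unit), IsDomSet (HSGraph S) D' ∧ D'.ncard = n}
    with hdomSet
  have huniv : IsDomSet (HSGraph S) Set.univ := fun v => ⟨v, trivial, Or.inl rfl⟩
  have hne : domSet.Nonempty := ⟨Set.univ.ncard, Set.univ, huniv, rfl⟩
  obtain ⟨D, hD, hDcard⟩ := Nat.sInf_mem hne
  -- the image set
  set D' : Set (U ⊕ ι ⊕ Unit) := toClique S hS '' D with hD'def
  have hD'dom : IsDomSet (HSGraph S) D' := by
    intro v
    obtain ⟨x, hx, hxv⟩ := hD v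
    exact ⟨toClique S hS x, Set.mem_image_of_mem _ hx, toClique_dominates S hS x v hxv⟩
  have hD'sub : D' ⊆ Set.range Sum.inl ∪ {Sum.inr (Sum.inr ())} := by
    rintro _ ⟨x, hx, rfl⟩
    match x with
    | Sum.inl a => exact Or.inl ⟨a, rfl⟩
    | Sum.inr (Sum.inl i) => exact Or.inl ⟨(hS i).choose, rfl⟩
    | Sum.inr (Sum.inr u) => exact Or.inr rfl
  have hD'le : D'.ncard ≤ D.ncard := Set.ncard_image_le D.toFinite
  have hD'card : D'.ncard = sInf domSet := by
    refine le_antisymm (hDcard ▸ hD'le) (Nat.sInf_le ⟨D', hD'dom, rfl⟩)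
  have hD'ne : D'.Nonempty := by
    obtain ⟨x, hx, _⟩ := hD (Sum.inr (Sum.inr ()))
    exact ⟨toClique S hS x, Set.mem_image_of_mem _ hx⟩
  have hconn : ((HSGraph S).induce D').Connected := by
    rw [SimpleGraph.connected_iff]
    refine ⟨fun x y => ?_, ⟨⟨hD'ne.choose, hD'ne.choose_spec⟩⟩⟩
    by_cases hxy : x = y
    · subst hxy; exact SimpleGraph.Reachable.refl x
    · refine SimpleGraph.Adj.reachable ?_
      have : (HSGraph S).Adj x.val y.val :=
        clique_adj S x.val y.val (hD'sub x.2) (hD'sub y.2)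
          (fun h => hxy (Subtype.ext h))
      exact this
  refine ⟨⟨D', hD'dom, hD'card, hD'sub⟩, ?_⟩
  set connSet := {n | ∃ D : Set (U ⊕ ι ⊕ Unit), (IsDomSet (HSGraph S) D ∧
      ((HSGraph S).induce D).Connected) ∧ D.ncard = n} with hconnSet
  have hcne : connSet.Nonempty := ⟨D'.ncard, D', ⟨hD'dom, hconn⟩, rfl⟩
  refine le_antisymm ?_ ?_
  · rw [← hD'card]; exact Nat.sInf_le ⟨D', ⟨hD'dom, hconn⟩, rfl⟩
  · obtain ⟨E, ⟨hE, _⟩, hEcard⟩ := Nat.sInf_mem hcne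
    exact Nat.sInf_le ⟨E, hE, hEcard⟩
end
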